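/- arXiv:2209.13201 — 4 statements merged into one kernel-verified Lean document; each statement's English description precedes it below -/
import Mathlib

section
/- Let A be an algebra over a field F with char(F) ≠ 2. The dual space A* is an A-bimodule via (x·f)(y) = f(yx) and (f·x)(y) = f(xy). If Φ : A × A → F is a skew-symmetric bilinear map satisfying Φ(x², x) = 0 for all x ∈ A, then the linear map δ : A → A* defined by δ(y)(x) = Φ(y, x) is a Jordan derivation, i.e., δ(yz + zy) = δ(y)·z + y·δ(z) + δ(z)·y + z·δ(y) for all y, z ∈ A. -/
/-- With the bimodule actions on `A*` given by `(x·f)(y) = f(yx)` and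
`(f·x)(y) = f(xy)`, a skew-symmetric bilinear `Φ` with `Φ(x²,x) = 0` yields a Jordan
derivation `δ : A → A*`, `δ(y)(x) = Φ(y,x)`; stated pointwise:
`δ(yz+zy)(x) = (δ(y)·z)(x) + (y·δ(z))(x) + (δ(z)·y)(x) + (z·δ(y))(x)`, i.e.
`Φ(yz+zy, x) = Φ(y, zx) + Φ(z, xy) + Φ(z, yx) + Φ(y, xz)`. -/
theorem stmt1 {F A : Type*} [Field F] [NonUnitalRing A] [Module F A]
    [SMulCommClass F A A] [IsScalarTower F A A]
    (hchar : (2 : F) ≠ 0)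
    (Φ : A →ₗ[F] A →ₗ[F] F)
    (hskew : ∀ x y : A, Φ x y = - Φ y x)
    (hcube : ∀ x : A, Φ (x * x) x = 0) :
    ∀ y z x : A,
      Φ (y * z + z * y) x = Φ y (z * x) + Φ z (x * y) + Φ z (y * x) + Φ y (x * z) := by
  have key : ∀ x y z : A,
      Φ (x * z + z * x) y + Φ (x * y + y * x) z + Φ (z * y + y * z) x = 0 := by
    intro x y z
    have hxyz := hcube (x + y + z)
    have hxy := hcube (x + y)
    have hxz := hcube (x + z)
    have hyz := hcube (y + z)
    have hx := hcube x
    have hy := hcube y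
    have hz := hcube z
    simp only [mul_add, add_mul, map_add, LinearMap.add_apply] at *
    linear_combination hxyz - hxy - hxz - hyz + hx + hy + hz
  intro y z x
  have h := key x z y
  rw [hskew y (z * x), hskew z (x * y), hskew z (y * x), hskew y (x * z)]
  have e1 : Φ (x * y + y * x) z = Φ (x * y) z + Φ (y * x) z := by
    simp [map_add]
  have e2 : Φ (x * z + z * x) y = Φ (x * z) y + Φ (z * x) y := by
    simp [map_add]
  rw [e1, e2] at h
  have e3 : Φ (y * z + z * y) x = Φ (y * z) x + Φ (z * y) x := by
    simp [map_add]
  rw [e3]; rw [e3] at h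
  linear_combination h
end

section
/- Let A be an algebra over a field F with char(F) ≠ 2 and X a vector space over F. If a skew-symmetric bilinear map Φ : A × A → X satisfies Φ(x², x) = 0 for all x ∈ A, then Φ(xy, u) + Φ(ux, y) + Φ(yu, x) = 0 for all u in the subalgebra generated by [[A,A],[A,A]] and all x, y ∈ A. -/
set_option maxHeartbeats 4000000 in
/-- If a skew-symmetric bilinear map `Φ : A × A → X` satisfies `Φ(x²,x) = 0`,
then `Φ(xy,u) + Φ(ux,y) + Φ(yu,x) = 0` for all `u ∈ Alg([[A,A],[A,A]])` and all `x, y`. -/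
theorem stmt3 {F A X : Type*} [Field F] [NonUnitalRing A] [Module F A]
    [SMulCommClass F A A] [IsScalarTower F A A]
    [AddCommGroup X] [Module F X]
    (hchar : (2 : F) ≠ 0)
    (Φ : A →ₗ[F] A →ₗ[F] X)
    (hskew : ∀ a b : A, Φ a b = - Φ b a)
    (hcube : ∀ a : A, Φ (a * a) a = 0) :
    ∀ u ∈ NonUnitalAlgebra.adjoin F
        {w : A | ∃ a b c d : A,
          w = (a * b - b * a) * (c * d - d * c) - (c * d - d * c) * (a * b - b * a)},
      ∀ x y : A, Φ (x * y) u + Φ (u * x) y + Φ (y * u) x = 0 := by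
  have hskew2 : ∀ u v : A, Φ u v + Φ v u = 0 := by
    intro u v; rw [hskew u v]; abel
  have half : ∀ v : X, (2:F) • v = 0 → v = 0 := by
    intro v h
    have h2 := congrArg (fun w => (2:F)⁻¹ • w) h
    simpa [smul_smul, inv_mul_cancel₀ hchar] using h2
  have hsym : ∀ a b c : A, Φ (a*b) c + Φ (b*a) c + Φ (b*c) a + Φ (c*b) a + Φ (c*a) b + Φ (a*c) b = 0 := by
    intro a b c
    have h1 := hcube (a+b+c)
    have h2 := hcube (a+b)
    have h3 := hcube (a+c)
    have h4 := hcube (b+c)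
    have h5 := hcube a
    have h6 := hcube b
    have h7 := hcube c
    simp only [mul_add, add_mul, map_add, LinearMap.add_apply] at h1 h2 h3 h4
    linear_combination (norm := module) h1 - h2 - h3 - h4 + h5 + h6 + h7
  have hI : ∀ x y p q : A,
      (Φ (x*y) (p*q) + Φ ((p*q)*x) y + Φ (y*(p*q)) x)
      - (Φ (x*y) (q*p) + Φ ((q*p)*x) y + Φ (y*(q*p)) x)
      + (Φ (p*q) (x*y) + Φ ((x*y)*p) q + Φ (q*(x*y)) p)
      - (Φ (p*q) (y*x) + Φ ((y*x)*p) q + Φ (q*(y*x)) p) = 0 := by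
    intro x y p q
    refine half _ ?_
    linear_combination (norm := (simp only [smul_sub, smul_add, two_smul, mul_sub, sub_mul, mul_add, add_mul, map_sub, map_add, LinearMap.sub_apply, LinearMap.add_apply, mul_assoc]; abel1)) hsym p q (x*y) - hsym p q (y*x) + hsym p (q*x) y - hsym p (q*y) x - hsym p x (y*q) + hsym p (x*q) y + hsym (p*q) x y - hsym (p*x) q y + hsym (p*y) q x + hsym q x (y*p) - hsym q (x*p) y - hsym (q*p) x y + hskew2 (x*y) (p*q) - hskew2 (x*y) (q*p) - hskew2 (p*q) (y*x) + hskew2 (q*p) (y*x) - hskew2 (p*y) (q*x) - hskew2 (y*p) (q*x) + hskew2 (p*x) (q*y) + hskew2 (x*p) (q*y) + hskew2 (p*x) (y*q) + hskew2 (x*p) (y*q) - hskew2 (p*y) (x*q) - hskew2 (y*p) (x*q)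
  have hmul : ∀ x y u v : A,
      (Φ (x*y) (u*v) + Φ ((u*v)*x) y + Φ (y*(u*v)) x)
      - (Φ (v*(y*x)) u + Φ (u*v) (y*x) + Φ ((y*x)*u) v)
      - (Φ (x*(y*v)) u + Φ (u*x) (y*v) + Φ ((y*v)*u) x)
      - (Φ ((u*x)*y) v + Φ (v*(u*x)) y + Φ (y*v) (u*x)) = 0 := by
    intro x y u v
    refine half _ ?_
    linear_combination (norm := (simp only [smul_sub, smul_add, two_smul, mul_sub, sub_mul, mul_add, add_mul, map_sub, map_add, LinearMap.sub_apply, LinearMap.add_apply, mul_assoc]; abel1)) - hsym u v (x*y) - hsym u v (y*x) + hsym u (v*x) y - hsym u (v*y) x - hsym u x (y*v) + hsym u (x*v) y + hsym (u*v) x y - hsym (u*x) v y + hsym (u*y) v x + hsym v x (y*u) - hsym v (x*u) y - hsym (v*u) x y + hskew2 (x*y) (u*v) - hskew2 (u*v) (y*x) - hskew2 (u*x) (y*v) + hskew2 (v*u) (x*y) + hskew2 (v*u) (y*x) - hskew2 (u*y) (v*x) - hskew2 (y*u) (v*x) + hskew2 (u*x) (v*y) + hskew2 (x*u) (v*y)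 + hskew2 (x*u) (y*v) - hskew2 (u*y) (x*v) - hskew2 (y*u) (x*v)
  have hseed : ∀ a b c d x y : A,
      Φ ((a*b - b*a)*(c*d - d*c)) (x*y - y*x)
      + Φ ((x*y - y*x)*(a*b - b*a)) (c*d - d*c)
      + Φ ((c*d - d*c)*(x*y - y*x)) (a*b - b*a) = 0 := by
    intro a b c d x y
    refine half _ ?_
    linear_combination (norm := (simp only [smul_sub, smul_add, two_smul, mul_sub, sub_mul, mul_add, add_mul, map_sub, map_add, LinearMap.sub_apply, LinearMap.add_apply, mul_assoc]; abel1)) - hI c (d*a - a*d) (y*x - x*y) b - hsym c (d*a - a*d) (b*(y*x - x*y) - (y*x - x*y)*b) + hI y (x*b - b*x) (a*d - d*a) c - hI y (x*b - b*x) (a*c - c*a) d + hI y (x*b - b*x) a (c*d - d*c) - hI c d (b*(x*y - y*x) - (x*y - y*x)*b) a - hI c d (a*(y*x - x*y) - (y*x - x*y)*a) b - hI y (x*a - a*x) b (c*d - d*c) + hI y (x*a - a*x) (b*c - c*b) d - hI y (x*a - a*x) (b*d - d*b) c + hI x (y*a - a*y) b (c*d - d*c) - hI x (y*a - a*y) (b*c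 - c*b) d + hI x (y*a - a*y) (b*d - d*b) c - hI c d (y*x - x*y) (a*b - b*a) - hsym d (c*a - a*c) (b*(x*y - y*x) - (x*y - y*x)*b) + hI d (c*a - a*c) (y*x - x*y) b + hsym d (c*b - b*c) (a*(x*y - y*x) - (x*y - y*x)*a) + hI d (c*b - b*c) (x*y - y*x) a - hI x y a (b*(c*d - d*c) - (c*d - d*c)*b) - hI x y b (a*(d*c - c*d) - (d*c - c*d)*a) + hI x y (b*a - a*b) (d*c - c*d) - hI c (d*b - b*d) (x*y - y*x) a + hsym c (d*b - b*d) (a*(y*x - x*y) - (y*x - x*y)*a) + hI x (y*b - b*y) (a*c - c*a) d - hI x (y*b - b*y) (a*d - d*a) c + hI x (y*b - b*y) a (d*c - c*d)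
  intro u hu
  induction hu using NonUnitalAlgebra.adjoin_induction with
  | mem w hw =>
      obtain ⟨a, b, c, d, rfl⟩ := hw
      intro x y
      linear_combination (norm := (simp only [smul_sub, smul_add, two_smul, mul_sub, sub_mul, mul_add, add_mul, map_sub, map_add, LinearMap.sub_apply, LinearMap.add_apply, mul_assoc]; abel1)) hI x y (a*b - b*a) (c*d - d*c) - hseed a b c d x y
  | add p q hp hq ihp ihq =>
      intro x y
      linear_combination (norm := (simp only [mul_add, add_mul, map_add, LinearMap.add_apply]; module)) ihp x y + ihq x y
  | zero => intro x y; simp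
  | mul p q hp hq ihp ihq =>
      intro x y
      linear_combination (norm := (simp only [smul_sub, smul_add, two_smul, mul_sub, sub_mul, mul_add, add_mul, map_sub, map_add, LinearMap.sub_apply, LinearMap.add_apply, mul_assoc]; abel1)) hmul x y p q + ihp q (y*x) + ihp x (y*q) + ihq (p*x) y
  | smul r p hp ihp =>
      intro x y
      have h := ihp x y
      simp only [mul_smul_comm, smul_mul_assoc, map_smul, LinearMap.smul_apply]
      rw [← smul_add, ← smul_add, h, smul_zero]
end

section
/- Let A be a noncommutative simple algebra over a field F with char(F) ≠ 2. Then A is generated as an algebra by the double commutators [[a,b],[c,d]], i.e., A = Alg([[A,A],[A,A]]). -/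
section aux

variable {A : Type*} [NonUnitalRing A]

/-- In a simple ring with `A*A ≠ 0`, if `c` kills everything on the left, `c = 0`. -/
private lemma annL
    (hsimple : (∃ a b : A, a * b ≠ 0) ∧ ∀ I : TwoSidedIdeal A, I = ⊥ ∨ I = ⊤)
    (c : A) (hc : ∀ y : A, c * y = 0) : c = 0 := by
  classical
  let I : TwoSidedIdeal A := TwoSidedIdeal.mk' {x : A | ∀ y : A, x * y = 0}
    (by intro y; simp)
    (by intro x y hx hy t; rw [add_mul, hx, hy, add_zero])
    (by intro x hx t; rw [neg_mul, hx, neg_zero])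
    (by intro x y hy t; rw [mul_assoc, hy, mul_zero])
    (by intro x y hx t; rw [mul_assoc]; exact hx _)
  rcases hsimple.2 I with hbot | htop
  · have hcI : c ∈ I := by
      rw [TwoSidedIdeal.mem_mk']; exact hc
    rw [hbot] at hcI
    exact (TwoSidedIdeal.mem_bot A).mp hcI
  · exfalso
    obtain ⟨a, b, hab⟩ := hsimple.1
    have haI : a ∈ I := by rw [htop]; exact TwoSidedIdeal.mem_top A
    rw [TwoSidedIdeal.mem_mk'] at haI
    exact hab (haI b)

/-- In a simple ring with `A*A ≠ 0`, if `c` kills everything on the right, `c = 0`. -/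
private lemma annR
    (hsimple : (∃ a b : A, a * b ≠ 0) ∧ ∀ I : TwoSidedIdeal A, I = ⊥ ∨ I = ⊤)
    (c : A) (hc : ∀ y : A, y * c = 0) : c = 0 := by
  classical
  let I : TwoSidedIdeal A := TwoSidedIdeal.mk' {x : A | ∀ y : A, y * x = 0}
    (by intro y; simp)
    (by intro x y hx hy t; rw [mul_add, hx, hy, add_zero])
    (by intro x hx t; rw [mul_neg, hx, neg_zero])
    (by intro x y hy t; rw [← mul_assoc, hy])
    (by intro x y hx t; rw [← mul_assoc, hx, zero_mul])
  rcases hsimple.2 I with hbot | htop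
  · have hcI : c ∈ I := by
      rw [TwoSidedIdeal.mem_mk']; exact hc
    rw [hbot] at hcI
    exact (TwoSidedIdeal.mem_bot A).mp hcI
  · exfalso
    obtain ⟨a, b, hab⟩ := hsimple.1
    have hbI : b ∈ I := by rw [htop]; exact TwoSidedIdeal.mem_top A
    rw [TwoSidedIdeal.mem_mk'] at hbI
    exact hab (hbI a)

/-- Nonzero central elements of a simple ring are left-regular. -/
private lemma central_regular
    (hsimple : (∃ a b : A, a * b ≠ 0) ∧ ∀ I : TwoSidedIdeal A, I = ⊥ ∨ I = ⊤)
    (z : A) (hzc : ∀ y : A, z * y = y * z) (hz : z ≠ 0) :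
    ∀ a : A, z * a = 0 → a = 0 := by
  classical
  let I : TwoSidedIdeal A := TwoSidedIdeal.mk' {x : A | z * x = 0}
    (by simp)
    (by intro x y hx hy; show z * (x + y) = 0; rw [mul_add, hx, hy, add_zero])
    (by intro x hx; show z * (-x) = 0; rw [mul_neg, hx, neg_zero])
    (by intro x y hy; show z * (x * y) = 0
        rw [← mul_assoc, hzc x, mul_assoc, hy, mul_zero])
    (by intro x y hx; show z * (x * y) = 0; rw [← mul_assoc, hx, zero_mul])
  rcases hsimple.2 I with hbot | htop
  · intro a ha
    have haI : a ∈ I := by rw [TwoSidedIdeal.mem_mk']; exact ha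
    rw [hbot] at haI
    exact (TwoSidedIdeal.mem_bot A).mp haI
  · exfalso
    apply hz
    apply annL hsimple
    intro y
    have hyI : y ∈ I := by rw [htop]; exact TwoSidedIdeal.mem_top A
    rw [TwoSidedIdeal.mem_mk'] at hyI
    exact hyI

/-- If `c * c = 0` and `c * y * c = 0` for all `y`, in a simple ring, then `c = 0`. -/
private lemma square_zero_sandwich_zero
    (hsimple : (∃ a b : A, a * b ≠ 0) ∧ ∀ I : TwoSidedIdeal A, I = ⊥ ∨ I = ⊤)
    (c : A) (hc2 : c * c = 0) (hcac : ∀ y : A, c * y * c = 0) : c = 0 := by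
  classical
  let I : TwoSidedIdeal A := TwoSidedIdeal.mk'
      {x : A | x * c = 0 ∧ ∀ y : A, x * y * c = 0}
    (by constructor <;> simp)
    (by rintro x y ⟨hx1, hx2⟩ ⟨hy1, hy2⟩
        refine ⟨by rw [add_mul, hx1, hy1, add_zero], fun t => ?_⟩
        rw [add_mul, add_mul, hx2, hy2, add_zero])
    (by rintro x ⟨hx1, hx2⟩
        refine ⟨by rw [neg_mul, hx1, neg_zero], fun t => ?_⟩
        rw [neg_mul, neg_mul, hx2, neg_zero])
    (by rintro a x ⟨hx1, hx2⟩
        refine ⟨by rw [mul_assoc, hx1, mul_zero], fun t => ?_⟩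
        rw [mul_assoc, mul_assoc, ← mul_assoc x t c, hx2, mul_zero])
    (by rintro x a ⟨hx1, hx2⟩
        refine ⟨hx2 a, fun t => ?_⟩
        have := hx2 (a * t)
        rw [mul_assoc x a t]
        exact this)
  rcases hsimple.2 I with hbot | htop
  · have hcI : c ∈ I := by
      rw [TwoSidedIdeal.mem_mk']; exact ⟨hc2, hcac⟩
    rw [hbot] at hcI
    exact (TwoSidedIdeal.mem_bot A).mp hcI
  · apply annR hsimple
    intro y
    have hyI : y ∈ I := by rw [htop]; exact TwoSidedIdeal.mem_top A
    rw [TwoSidedIdeal.mem_mk'] at hyI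
    exact hyI.1

end aux

section key

variable {F A : Type*} [Field F] [NonUnitalRing A] [Module F A]
    [SMulCommClass F A A] [IsScalarTower F A A]

/-- Key lemma: if `[u,[u,x]]` is central for every `x`, then `u` is central.
(Simple ring, characteristic ≠ 2.) -/
private lemma central_of_double_comm_central
    (hchar : (2 : F) ≠ 0)
    (hsimple : (∃ a b : A, a * b ≠ 0) ∧ ∀ I : TwoSidedIdeal A, I = ⊥ ∨ I = ⊤)
    (u : A)
    (hu : ∀ x y : A,
      (u * (u * x - x * u) - (u * x - x * u) * u) * y
        = y * (u * (u * x - x * u) - (u * x - x * u) * u)) :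
    ∀ y : A, u * y = y * u := by
  by_cases h : ∀ x : A, u * (u * x - x * u) - (u * x - x * u) * u = 0
  · -- d² = 0 case
    have key : ∀ x y : A, (u * x - x * u) * (u * y - y * u) = 0 := by
      intro x y
      have expand :
          u * (u * (x * y) - (x * y) * u) - (u * (x * y) - (x * y) * u) * u
            = (u * (u * x - x * u) - (u * x - x * u) * u) * y
              + ((u * x - x * u) * (u * y - y * u) + (u * x - x * u) * (u * y - y * u))
              + x * (u * (u * y - y * u) - (u * y - y * u) * u) := by
        noncomm_ring
      rw [h (x * y), h x, h y, zero_mul, mul_zero, zero_add, add_zero] at expand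
      have h2 : (2 : F) • ((u * x - x * u) * (u * y - y * u)) = 0 := by
        rw [two_smul]; exact expand.symm
      have := congrArg (fun a : A => (2 : F)⁻¹ • a) h2
      simpa [smul_smul, inv_mul_cancel₀ hchar] using this
    intro y
    have hsand : ∀ t : A, (u * y - y * u) * t * (u * y - y * u) = 0 := by
      intro t
      have idn : (u * y - y * u) * t * (u * y - y * u)
          = (u * y - y * u) * (u * (t * y) - (t * y) * u)
            - ((u * y - y * u) * (u * t - t * u)) * y := by
        noncomm_ring
      rw [idn, key y (t * y), key y t, zero_mul, sub_zero]
    have h2 : (u * y - y * u) * (u * y - y * u) = 0 := key y y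
    exact sub_eq_zero.mp (square_zero_sandwich_zero hsimple (u * y - y * u) h2 hsand)
  · push_neg at h
    obtain ⟨x, hx⟩ := h
    set z := u * (u * x - x * u) - (u * x - x * u) * u with hz
    have hzc : ∀ y : A, z * y = y * z := hu x
    -- z * u is central too, because z * u = [u,[u,x*u]]
    have keyid : u * (u * (x * u) - (x * u) * u) - (u * (x * u) - (x * u) * u) * u
        = z * u := by rw [hz]; noncomm_ring
    have hzuc : ∀ y : A, (z * u) * y = y * (z * u) := by
      intro y
      rw [← keyid]
      exact hu (x * u) y
    intro y
    rw [← sub_eq_zero]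
    apply central_regular hsimple z hzc hx
    have : z * (u * y - y * u) = (z * u) * y - (z * y) * u := by
      rw [mul_sub, mul_assoc, mul_assoc]
    rw [this, hzuc y, hzc y]
    rw [mul_assoc]
    exact sub_self _

end key

/-- A noncommutative simple algebra `A` over a field of characteristic `≠ 2`
is generated as an algebra by its double commutators: `A = Alg([[A,A],[A,A]])`. -/
theorem stmt4 {F A : Type*} [Field F] [NonUnitalRing A] [Module F A]
    [SMulCommClass F A A] [IsScalarTower F A A]
    (hchar : (2 : F) ≠ 0)
    (hsimple : (∃ a b : A, a * b ≠ 0) ∧ ∀ I : TwoSidedIdeal A, I = ⊥ ∨ I = ⊤)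
    (hnoncomm : ∃ x y : A, x * y ≠ y * x) :
    NonUnitalAlgebra.adjoin F
      {w : A | ∃ a b c d : A,
        w = (a * b - b * a) * (c * d - d * c) - (c * d - d * c) * (a * b - b * a)} = ⊤ := by
  classical
  set S : Set A := {w : A | ∃ a b c d : A,
    w = (a * b - b * a) * (c * d - d * c) - (c * d - d * c) * (a * b - b * a)} with hSdef
  set T := NonUnitalAlgebra.adjoin F S with hTdef
  have hT : ∀ s ∈ S, s ∈ T := fun s hs => NonUnitalAlgebra.subset_adjoin F hs
  -- T is a Lie ideal: [x, T] ⊆ T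
  have lie : ∀ t ∈ T, ∀ x : A, x * t - t * x ∈ T := by
    intro t ht
    induction ht using NonUnitalAlgebra.adjoin_induction with
    | mem s hs =>
      intro x
      obtain ⟨a, b, c, d, rfl⟩ := hs
      have id1 : x * ((a*b-b*a)*(c*d-d*c) - (c*d-d*c)*(a*b-b*a))
          - ((a*b-b*a)*(c*d-d*c) - (c*d-d*c)*(a*b-b*a)) * x
          = ((x*(a*b-b*a) - (a*b-b*a)*x)*(c*d-d*c) - (c*d-d*c)*(x*(a*b-b*a) - (a*b-b*a)*x))
            + ((a*b-b*a)*(x*(c*d-d*c) - (c*d-d*c)*x) - (x*(c*d-d*c) - (c*d-d*c)*x)*(a*b-b*a)) := by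
        noncomm_ring
      rw [id1]
      exact add_mem (hT _ ⟨x, a*b-b*a, c, d, rfl⟩) (hT _ ⟨a, b, x, c*d-d*c, rfl⟩)
    | add p q hp hq ihp ihq =>
      intro x
      have idn : x*(p+q) - (p+q)*x = (x*p - p*x) + (x*q - q*x) := by noncomm_ring
      rw [idn]; exact add_mem (ihp x) (ihq x)
    | zero => intro x; simpa using zero_mem T
    | mul p q hp hq ihp ihq =>
      intro x
      have idn : x*(p*q) - (p*q)*x = (x*p - p*x)*q + p*(x*q - q*x) := by noncomm_ring
      rw [idn]; exact add_mem (mul_mem (ihp x) hq) (mul_mem hp (ihq x))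
    | smul r p hp ihp =>
      intro x
      have idn : x*(r • p) - (r • p)*x = r • (x*p - p*x) := by
        rw [mul_smul_comm, smul_mul_assoc, smul_sub]
      rw [idn]; exact SMulMemClass.smul_mem r (ihp x)
  by_cases hc : ∀ u ∈ T, ∀ v ∈ T, u * v = v * u
  · -- T commutative ⇒ everything central ⇒ contradiction with noncommutativity
    exfalso
    have centT : ∀ u ∈ T, ∀ y : A, u * y = y * u := by
      intro u huT
      apply central_of_double_comm_central hchar hsimple u
      intro x y
      have h1 : u * x - x * u ∈ T := by
        have := neg_mem (lie u huT x)
        rwa [neg_sub] at this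
      have h0 : u * (u * x - x * u) - (u * x - x * u) * u = 0 :=
        sub_eq_zero.mpr (hc u huT _ h1)
      rw [h0, zero_mul, mul_zero]
    have centComm : ∀ a b : A, ∀ y : A, (a * b - b * a) * y = y * (a * b - b * a) := by
      intro a b
      apply central_of_double_comm_central hchar hsimple
      intro x y
      have hs : (a*b-b*a) * ((a*b-b*a)*x - x*(a*b-b*a))
          - ((a*b-b*a)*x - x*(a*b-b*a)) * (a*b-b*a) ∈ S := by
        refine ⟨a, b, a*b-b*a, x, ?_⟩
        noncomm_ring
      exact centT _ (hT _ hs) y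
    have centAll : ∀ a : A, ∀ y : A, a * y = y * a := by
      intro a
      apply central_of_double_comm_central hchar hsimple
      intro x y
      have h0 : a * (a * x - x * a) - (a * x - x * a) * a = 0 :=
        sub_eq_zero.mpr (centComm a x a).symm
      rw [h0, zero_mul, mul_zero]
    obtain ⟨x, y, hxy⟩ := hnoncomm
    exact hxy (centAll x y)
  · push_neg at hc
    obtain ⟨u, huT, v, hvT, hne⟩ := hc
    have hw : u * v - v * u ∈ T := sub_mem (mul_mem huT hvT) (mul_mem hvT huT)
    have hl : ∀ r : A, r * (u * v - v * u) ∈ T := by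
      intro r
      have idl : r * (u * v - v * u)
          = (u * (r * v) - (r * v) * u) - (u * r - r * u) * v := by noncomm_ring
      rw [idl]
      have h1 : u * (r * v) - (r * v) * u ∈ T := by
        have := neg_mem (lie u huT (r * v)); rwa [neg_sub] at this
      have h2 : u * r - r * u ∈ T := by
        have := neg_mem (lie u huT r); rwa [neg_sub] at this
      exact sub_mem h1 (mul_mem h2 hvT)
    have hr : ∀ r : A, (u * v - v * u) * r ∈ T := by
      intro r
      have idr : (u * v - v * u) * r
          = (u * (v * r) - (v * r) * u) - v * (u * r - r * u) := by noncomm_ring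
      rw [idr]
      have h1 : u * (v * r) - (v * r) * u ∈ T := by
        have := neg_mem (lie u huT (v * r)); rwa [neg_sub] at this
      have h2 : u * r - r * u ∈ T := by
        have := neg_mem (lie u huT r); rwa [neg_sub] at this
      exact sub_mem h1 (mul_mem hvT h2)
    have hlr : ∀ r s : A, (r * (u * v - v * u)) * s ∈ T := by
      intro r s
      have idm : (r * (u * v - v * u)) * s
          = ((r * (u * v - v * u)) * s - s * (r * (u * v - v * u)))
            + (s * r) * (u * v - v * u) := by noncomm_ring
      rw [idm]
      have h1 : (r * (u*v - v*u)) * s - s * (r * (u*v - v*u)) ∈ T := by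
        have := neg_mem (lie _ (hl r) s); rwa [neg_sub] at this
      exact add_mem h1 (hl (s * r))
    let I : TwoSidedIdeal A := TwoSidedIdeal.mk'
        {x : A | x ∈ T ∧ (∀ r : A, r * x ∈ T) ∧ (∀ r : A, x * r ∈ T)
          ∧ ∀ r s : A, (r * x) * s ∈ T}
      (⟨zero_mem T, fun r => by simpa using zero_mem T,
        fun r => by simpa using zero_mem T,
        fun r s => by simpa using zero_mem T⟩)
      (by rintro x y ⟨hx1, hx2, hx3, hx4⟩ ⟨hy1, hy2, hy3, hy4⟩
          refine ⟨add_mem hx1 hy1, fun r => ?_, fun r => ?_, fun r s => ?_⟩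
          · rw [mul_add]; exact add_mem (hx2 r) (hy2 r)
          · rw [add_mul]; exact add_mem (hx3 r) (hy3 r)
          · rw [mul_add, add_mul]; exact add_mem (hx4 r s) (hy4 r s))
      (by rintro x ⟨hx1, hx2, hx3, hx4⟩
          refine ⟨neg_mem hx1, fun r => ?_, fun r => ?_, fun r s => ?_⟩
          · rw [mul_neg]; exact neg_mem (hx2 r)
          · rw [neg_mul]; exact neg_mem (hx3 r)
          · rw [mul_neg, neg_mul]; exact neg_mem (hx4 r s))
      (by rintro a x ⟨hx1, hx2, hx3, hx4⟩
          refine ⟨hx2 a, fun r => ?_, fun r => ?_, fun r s => ?_⟩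
          · rw [← mul_assoc]; exact hx2 (r * a)
          · exact hx4 a r
          · rw [← mul_assoc r a x]; exact hx4 (r * a) s)
      (by rintro x a ⟨hx1, hx2, hx3, hx4⟩
          refine ⟨hx3 a, fun r => ?_, fun r => ?_, fun r s => ?_⟩
          · rw [← mul_assoc]; exact hx4 r a
          · rw [mul_assoc]; exact hx3 (a * r)
          · rw [← mul_assoc r x a, mul_assoc (r * x) a s]; exact hx4 r (a * s))
    have hwI : u * v - v * u ∈ I := by
      rw [TwoSidedIdeal.mem_mk']
      exact ⟨hw, hl, hr, hlr⟩
    rcases hsimple.2 I with hbot | htop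
    · exfalso
      rw [hbot] at hwI
      exact sub_ne_zero_of_ne hne ((TwoSidedIdeal.mem_bot A).mp hwI)
    · rw [eq_top_iff]
      rintro x -
      have hxI : x ∈ I := by rw [htop]; exact TwoSidedIdeal.mem_top A
      rw [TwoSidedIdeal.mem_mk'] at hxI
      exact hxI.1
end

section
/- Let A, B be algebras over a field F with char(F) ≠ 2, where B is semiprime, A = Alg([[A,A],[A,A]]), and J : A → B is a surjective Jordan homomorphism. Then J is a reversal homomorphism: J(xyzw + wzyx) = J(x)J(y)J(z)J(w) + J(w)J(z)J(y)J(x) for all x, y, z, w ∈ A. -/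
set_option maxHeartbeats 1600000

section SemiprimeAux

variable {B : Type*} [NonUnitalRing B]

private lemma closureMulZero {S : Set B} (h : ∀ s ∈ S, ∀ t ∈ S, s * t = 0) :
    ∀ a ∈ AddSubgroup.closure S, ∀ b ∈ AddSubgroup.closure S, a * b = 0 := by
  intro a ha
  induction ha using AddSubgroup.closure_induction with
  | mem s hs =>
      intro b hb
      induction hb using AddSubgroup.closure_induction with
      | mem t ht => exact h s hs t ht
      | zero => exact mul_zero s
      | add u v hu hv ihu ihv => rw [mul_add, ihu, ihv, add_zero]
      | neg u hu ihu => rw [mul_neg, ihu, neg_zero]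
  | zero => intro b hb; exact zero_mul b
  | add u v hu hv ihu ihv => intro b hb; rw [add_mul, ihu b hb, ihv b hb, add_zero]
  | neg u hu ihu => intro b hb; rw [neg_mul, ihu b hb, neg_zero]

private lemma closureMulLeft {S : Set B} (x : B) (h : ∀ s ∈ S, x * s ∈ AddSubgroup.closure S) :
    ∀ a ∈ AddSubgroup.closure S, x * a ∈ AddSubgroup.closure S := by
  intro a ha
  induction ha using AddSubgroup.closure_induction with
  | mem s hs => exact h s hs
  | zero => rw [mul_zero]; exact zero_mem _
  | add u v hu hv ihu ihv => rw [mul_add]; exact add_mem ihu ihv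
  | neg u hu ihu => rw [mul_neg]; exact neg_mem ihu

private lemma closureMulRight {S : Set B} (x : B) (h : ∀ s ∈ S, s * x ∈ AddSubgroup.closure S) :
    ∀ a ∈ AddSubgroup.closure S, a * x ∈ AddSubgroup.closure S := by
  intro a ha
  induction ha using AddSubgroup.closure_induction with
  | mem s hs => exact h s hs
  | zero => rw [zero_mul]; exact zero_mem _
  | add u v hu hv ihu ihv => rw [add_mul]; exact add_mem ihu ihv
  | neg u hu ihu => rw [neg_mul]; exact neg_mem ihu

/-- In a semiprime nonunital ring, `c B c = 0` implies `c = 0`. -/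
private lemma semiprimeElem
    (hsp : ∀ I : TwoSidedIdeal B, (∀ a ∈ I, ∀ b ∈ I, a * b = 0) → I = ⊥)
    (c : B) (hc : ∀ x, c * x * c = 0) : c = 0 := by
  -- Step 1 : ∀ x y, x * c * y = 0
  have step1 : ∀ x y : B, x * c * y = 0 := by
    set S : Set B := {t | ∃ x y, t = x * c * y} with hS
    have hl : ∀ z : B, ∀ s ∈ S, z * s ∈ AddSubgroup.closure S := by
      rintro z s ⟨x, y, rfl⟩
      exact AddSubgroup.subset_closure ⟨z * x, y, by noncomm_ring⟩
    have hr : ∀ z : B, ∀ s ∈ S, s * z ∈ AddSubgroup.closure S := by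
      rintro z s ⟨x, y, rfl⟩
      exact AddSubgroup.subset_closure ⟨x, y * z, by noncomm_ring⟩
    have hgen : ∀ s ∈ S, ∀ t ∈ S, s * t = 0 := by
      rintro s ⟨x, y, rfl⟩ t ⟨u, v, rfl⟩
      have e : x * c * y * (u * c * v) = x * (c * (y * u) * c) * v := by noncomm_ring
      rw [e, hc, mul_zero, zero_mul]
    let I : TwoSidedIdeal B := TwoSidedIdeal.mk' (AddSubgroup.closure S : Set B)
      (zero_mem _) (fun ha hb => add_mem ha hb) (fun ha => neg_mem ha)
      (fun {z s} hs => closureMulLeft z (hl z) s hs)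
      (fun {s z} hs => closureMulRight z (hr z) s hs)
    have hI : I = ⊥ := by
      apply hsp
      intro a ha b hb
      rw [TwoSidedIdeal.mem_mk'] at ha hb
      exact closureMulZero hgen a ha b hb
    intro x y
    have hm : x * c * y ∈ I := by
      rw [TwoSidedIdeal.mem_mk']
      exact AddSubgroup.subset_closure ⟨x, y, rfl⟩
    rw [hI, TwoSidedIdeal.mem_bot] at hm
    exact hm
  -- Step 2 : ∀ x, x * c = 0
  have step2 : ∀ x : B, x * c = 0 := by
    set S : Set B := {t | ∃ x, t = x * c} with hS
    have hl : ∀ z : B, ∀ s ∈ S, z * s ∈ AddSubgroup.closure S := by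
      rintro z s ⟨x, rfl⟩
      exact AddSubgroup.subset_closure ⟨z * x, by rw [mul_assoc]⟩
    have hr : ∀ z : B, ∀ s ∈ S, s * z ∈ AddSubgroup.closure S := by
      rintro z s ⟨x, rfl⟩
      rw [step1 x z]
      exact zero_mem _
    have hgen : ∀ s ∈ S, ∀ t ∈ S, s * t = 0 := by
      rintro s ⟨x, rfl⟩ t ⟨y, rfl⟩
      have e : x * c * (y * c) = x * (c * y * c) := by noncomm_ring
      rw [e, hc, mul_zero]
    let I : TwoSidedIdeal B := TwoSidedIdeal.mk' (AddSubgroup.closure S : Set B)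
      (zero_mem _) (fun ha hb => add_mem ha hb) (fun ha => neg_mem ha)
      (fun {z s} hs => closureMulLeft z (hl z) s hs)
      (fun {s z} hs => closureMulRight z (hr z) s hs)
    have hI : I = ⊥ := by
      apply hsp
      intro a ha b hb
      rw [TwoSidedIdeal.mem_mk'] at ha hb
      exact closureMulZero hgen a ha b hb
    intro x
    have hm : x * c ∈ I := by
      rw [TwoSidedIdeal.mem_mk']
      exact AddSubgroup.subset_closure ⟨x, rfl⟩
    rw [hI, TwoSidedIdeal.mem_bot] at hm
    exact hm
  -- Step 3 : ∀ x, c * x = 0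
  have step3 : ∀ x : B, c * x = 0 := by
    set S : Set B := {t | ∃ x, t = c * x} with hS
    have hl : ∀ z : B, ∀ s ∈ S, z * s ∈ AddSubgroup.closure S := by
      rintro z s ⟨x, rfl⟩
      have e : z * (c * x) = z * c * x := by rw [mul_assoc]
      rw [e, step2 z, zero_mul]
      exact zero_mem _
    have hr : ∀ z : B, ∀ s ∈ S, s * z ∈ AddSubgroup.closure S := by
      rintro z s ⟨x, rfl⟩
      exact AddSubgroup.subset_closure ⟨x * z, by rw [mul_assoc]⟩
    have hgen : ∀ s ∈ S, ∀ t ∈ S, s * t = 0 := by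
      rintro s ⟨x, rfl⟩ t ⟨y, rfl⟩
      have e : c * x * (c * y) = c * (x * (c * y)) := by rw [mul_assoc]
      rw [e, ← mul_assoc x c y, step2 x, zero_mul, mul_zero]
    let I : TwoSidedIdeal B := TwoSidedIdeal.mk' (AddSubgroup.closure S : Set B)
      (zero_mem _) (fun ha hb => add_mem ha hb) (fun ha => neg_mem ha)
      (fun {z s} hs => closureMulLeft z (hl z) s hs)
      (fun {s z} hs => closureMulRight z (hr z) s hs)
    have hI : I = ⊥ := by
      apply hsp
      intro a ha b hb
      rw [TwoSidedIdeal.mem_mk'] at ha hb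
      exact closureMulZero hgen a ha b hb
    intro x
    have hm : c * x ∈ I := by
      rw [TwoSidedIdeal.mem_mk']
      exact AddSubgroup.subset_closure ⟨x, rfl⟩
    rw [hI, TwoSidedIdeal.mem_bot] at hm
    exact hm
  -- Step 4 : the ideal ℤ•c
  let I : TwoSidedIdeal B := TwoSidedIdeal.mk' {t | ∃ k : ℤ, t = k • c}
    ⟨0, (zero_zsmul c).symm⟩
    (by rintro _ _ ⟨j, rfl⟩ ⟨k, rfl⟩; exact ⟨j + k, (add_zsmul c j k).symm⟩)
    (by rintro _ ⟨j, rfl⟩; exact ⟨-j, (neg_zsmul c j).symm⟩)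
    (by rintro x _ ⟨k, rfl⟩; exact ⟨0, by rw [mul_smul_comm, step2 x, smul_zero, zero_zsmul]⟩)
    (by rintro _ y ⟨k, rfl⟩; exact ⟨0, by rw [smul_mul_assoc, step3 y, smul_zero, zero_zsmul]⟩)
  have hI : I = ⊥ := by
    apply hsp
    rintro a ha b hb
    rw [TwoSidedIdeal.mem_mk'] at ha hb
    obtain ⟨j, rfl⟩ := ha
    obtain ⟨k, rfl⟩ := hb
    rw [smul_mul_assoc, mul_smul_comm, step3 c, smul_zero, smul_zero]
  have hm : c ∈ I := by
    rw [TwoSidedIdeal.mem_mk']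
    exact ⟨1, (one_zsmul c).symm⟩
  rw [hI, TwoSidedIdeal.mem_bot] at hm
  exact hm

/-- If `u X v + v X u = 0` for all `X`, then `u X v = 0` for all `X` (semiprime, 2-torsionfree). -/
private lemma anticommLemma (half : ∀ b : B, b + b = 0 → b = 0)
    (spA : ∀ c : B, (∀ x, c * x * c = 0) → c = 0)
    (u v : B) (h : ∀ X : B, u * X * v + v * X * u = 0) :
    ∀ X : B, u * X * v = 0 := by
  have key : ∀ y x : B, u * y * v * x * u = 0 := by
    intro y x
    apply half
    have e : u * y * v * x * u + u * y * v * x * u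
        = u * y * (u * x * v + v * x * u) - (u * (y * u * x) * v + v * (y * u * x) * u)
          + (u * y * v + v * y * u) * (x * u) := by noncomm_ring
    rw [e, h x, h (y * u * x), h y]
    simp
  intro X
  apply spA
  intro z
  have e : u * X * v * z * (u * X * v) = u * X * v * z * u * (X * v) := by noncomm_ring
  rw [e, key X z, zero_mul]

end SemiprimeAux

/-- If `B` is semiprime (no nonzero nilpotent ideals, equivalently `I² = 0`
implies `I = 0`), `A = Alg([[A,A],[A,A]])`, `char F ≠ 2`, and `J : A → B` is a surjective
Jordan homomorphism, then `J` is a reversal homomorphism: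
`J(xyzw + wzyx) = J(x)J(y)J(z)J(w) + J(w)J(z)J(y)J(x)`. -/
theorem stmt15 {F A B : Type*} [Field F]
    [NonUnitalRing A] [Module F A] [SMulCommClass F A A] [IsScalarTower F A A]
    [NonUnitalRing B] [Module F B] [SMulCommClass F B B] [IsScalarTower F B B]
    (hchar : (2 : F) ≠ 0)
    (hgen : NonUnitalAlgebra.adjoin F
      {w : A | ∃ a b c d : A,
        w = (a * b - b * a) * (c * d - d * c) - (c * d - d * c) * (a * b - b * a)} = ⊤)
    (hsemiprime : ∀ I : TwoSidedIdeal B, (∀ a ∈ I, ∀ b ∈ I, a * b = 0) → I = ⊥)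
    (J : A →ₗ[F] B)
    (hsurj : Function.Surjective J)
    (hJ : ∀ y z : A, J (y * z + z * y) = J y * J z + J z * J y) :
    ∀ x y z w : A,
      J (x * y * z * w + w * z * y * x)
        = J x * J y * J z * J w + J w * J z * J y * J x := by
  have half : ∀ b : B, b + b = 0 → b = 0 := by
    intro b hb
    have h2 : (2 : F) • b = 0 := by rw [two_smul]; exact hb
    have h3 := congrArg (fun t => (2 : F)⁻¹ • t) h2
    simpa [smul_smul, inv_mul_cancel₀ hchar] using h3
  have halfeq : ∀ p q : B, p + p = q + q → p = q := by
    intro p q h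
    have e : (p - q) + (p - q) = (p + p) - (q + q) := by abel
    rw [h, sub_self] at e
    exact sub_eq_zero.mp (half _ e)
  have spA : ∀ c : B, (∀ X : B, c * X * c = 0) → c = 0 :=
    fun c hc => semiprimeElem hsemiprime c hc
  have neg_of_add : ∀ p q : B, p + q = 0 → q = -p := by
    intro p q h
    rw [add_comm] at h
    exact eq_neg_of_add_eq_zero_left h
  -- J(a²) = J(a)²
  have sq : ∀ a : A, J (a * a) = J a * J a := by
    intro a
    apply halfeq
    have h := hJ a a
    rw [map_add] at h
    exact h
  -- J(aba) = J(a)J(b)J(a)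
  have aba : ∀ a b : A, J (a * b * a) = J a * J b * J a := by
    intro a b
    apply halfeq
    have e : a * b * a + a * b * a
        = (a * (a * b + b * a) + (a * b + b * a) * a) - ((a * a) * b + b * (a * a)) := by
      noncomm_ring
    calc J (a * b * a) + J (a * b * a) = J (a * b * a + a * b * a) := (map_add J _ _).symm
      _ = J (a * (a * b + b * a) + (a * b + b * a) * a) - J ((a * a) * b + b * (a * a)) := by
          rw [e, map_sub]
      _ = (J a * J (a * b + b * a) + J (a * b + b * a) * J a)
            - (J (a * a) * J b + J b * J (a * a)) := by
          rw [hJ a (a * b + b * a), hJ (a * a) b]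
      _ = J a * J b * J a + J a * J b * J a := by rw [hJ a b, sq a]; noncomm_ring
  -- linearized : J(apb + bpa) = JaJpJb + JbJpJa
  have lin3 : ∀ a p b : A, J (a * p * b + b * p * a) = J a * J p * J b + J b * J p * J a := by
    intro a p b
    have e : a * p * b + b * p * a = (a + b) * p * (a + b) - a * p * a - b * p * b := by
      noncomm_ring
    calc J (a * p * b + b * p * a)
        = J ((a + b) * p * (a + b)) - J (a * p * a) - J (b * p * b) := by
          rw [e, map_sub, map_sub]
      _ = (J a + J b) * J p * (J a + J b) - J a * J p * J a - J b * J p * J b := by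
          rw [aba (a + b) p, aba a p, aba b p, map_add]
      _ = J a * J p * J b + J b * J p * J a := by noncomm_ring
  have hq : ∀ a b : A, J (b * a) = J a * J b + J b * J a - J (a * b) := by
    intro a b
    have h := hJ a b
    rw [map_add] at h
    exact eq_sub_of_add_eq' h
  -- the (★★) identity
  have starstar : ∀ a b p : A,
      J (a * b) * J p * J (a * b) + J (b * a) * J p * J (b * a)
        = J a * J b * J p * (J a * J b) + J b * J a * J p * (J b * J a) := by
    intro a b p
    have e : ((a * b) * p * (a * b)) + ((b * a) * p * (b * a))
        = ((a * (b * p * a) * b + b * (b * p * a) * a) + (b * (a * p * b) * a + a * (a * p * b) * b))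
          - ((a * a) * p * (b * b) + (b * b) * p * (a * a)) := by noncomm_ring
    have main : J (a * b) * J p * J (a * b) + J (b * a) * J p * J (b * a)
        = J ((a * (b * p * a) * b + b * (b * p * a) * a) + (b * (a * p * b) * a + a * (a * p * b) * b))
          - J ((a * a) * p * (b * b) + (b * b) * p * (a * a)) := by
      rw [← aba (a * b) p, ← aba (b * a) p, ← map_sub, ← map_add, e]
    have s : J (b * p * a) = (J b * J p * J a + J a * J p * J b) - J (a * p * b) := by
      apply eq_sub_of_add_eq
      have h := lin3 b p a
      rw [map_add] at h
      exact h
    rw [main, map_add, lin3 a (b * p * a) b, lin3 b (a * p * b) a, lin3 (a * a) p (b * b),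
      sq a, sq b, s]
    noncomm_ring
  -- the fundamental relation : f(a,b) X g(a,b) + g(a,b) X f(a,b) = 0 for all X ∈ B
  have key0 : ∀ (a b : A) (X : B),
      (J (a * b) - J a * J b) * X * (J (a * b) - J b * J a)
        + (J (a * b) - J b * J a) * X * (J (a * b) - J a * J b) = 0 := by
    intro a b X
    obtain ⟨p, rfl⟩ := hsurj X
    have ss := starstar a b p
    rw [hq a b] at ss
    have e : (J (a * b) - J a * J b) * J p * (J (a * b) - J b * J a)
        + (J (a * b) - J b * J a) * J p * (J (a * b) - J a * J b)
        = (J (a * b) * J p * J (a * b)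
            + (J a * J b + J b * J a - J (a * b)) * J p * (J a * J b + J b * J a - J (a * b)))
          - (J a * J b * J p * (J a * J b) + J b * J a * J p * (J b * J a)) := by noncomm_ring
    rw [e, ss, sub_self]
  have fXg : ∀ (a b : A) (X : B),
      (J (a * b) - J a * J b) * X * (J (a * b) - J b * J a) = 0 :=
    fun a b => anticommLemma half spA _ _ (key0 a b)
  have gXf : ∀ (a b : A) (X : B),
      (J (a * b) - J b * J a) * X * (J (a * b) - J a * J b) = 0 := by
    intro a b X
    have h := key0 a b X
    rw [fXg a b X, zero_add] at h
    exact h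
  -- bilinearity expansions
  have fadd : ∀ a c b : A, J ((a + c) * b) - J (a + c) * J b
      = (J (a * b) - J a * J b) + (J (c * b) - J c * J b) := by
    intro a c b
    rw [add_mul, map_add, map_add]
    noncomm_ring
  have gadd : ∀ a c b : A, J ((a + c) * b) - J b * J (a + c)
      = (J (a * b) - J b * J a) + (J (c * b) - J b * J c) := by
    intro a c b
    rw [add_mul, map_add, map_add]
    noncomm_ring
  have fadd2 : ∀ a b d : A, J (a * (b + d)) - J a * J (b + d)
      = (J (a * b) - J a * J b) + (J (a * d) - J a * J d) := by
    intro a b d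
    rw [mul_add, map_add, map_add]
    noncomm_ring
  have gadd2 : ∀ a b d : A, J (a * (b + d)) - J (b + d) * J a
      = (J (a * b) - J b * J a) + (J (a * d) - J d * J a) := by
    intro a b d
    rw [mul_add, map_add, map_add]
    noncomm_ring
  -- stage 1 : mixed in first argument
  have stage1 : ∀ (a b c : A) (X : B),
      (J (a * b) - J a * J b) * X * (J (c * b) - J b * J c) = 0 := by
    intro a b c X
    have lin : ∀ Y : B, (J (c * b) - J b * J c) * Y * (J (a * b) - J a * J b)
        = -((J (a * b) - J b * J a) * Y * (J (c * b) - J c * J b)) := by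
      intro Y
      have h0 := gXf (a + c) b Y
      rw [gadd a c b, fadd a c b] at h0
      have e2 : ((J (a * b) - J b * J a) + (J (c * b) - J b * J c)) * Y
            * ((J (a * b) - J a * J b) + (J (c * b) - J c * J b))
          = ((J (a * b) - J b * J a) * Y * (J (a * b) - J a * J b))
            + ((J (c * b) - J b * J c) * Y * (J (c * b) - J c * J b))
            + (((J (a * b) - J b * J a) * Y * (J (c * b) - J c * J b))
              + ((J (c * b) - J b * J c) * Y * (J (a * b) - J a * J b))) := by noncomm_ring
      rw [e2, gXf a b Y, gXf c b Y, zero_add, zero_add] at h0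
      exact neg_of_add _ _ h0
    apply spA
    intro Y
    calc (J (a * b) - J a * J b) * X * (J (c * b) - J b * J c) * Y
          * ((J (a * b) - J a * J b) * X * (J (c * b) - J b * J c))
        = (J (a * b) - J a * J b) * X
            * ((J (c * b) - J b * J c) * Y * (J (a * b) - J a * J b))
            * (X * (J (c * b) - J b * J c)) := by noncomm_ring
      _ = (J (a * b) - J a * J b) * X
            * (-((J (a * b) - J b * J a) * Y * (J (c * b) - J c * J b)))
            * (X * (J (c * b) - J b * J c)) := by rw [lin Y]
      _ = -(((J (a * b) - J a * J b) * X * (J (a * b) - J b * J a))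
            * (Y * ((J (c * b) - J c * J b) * X * (J (c * b) - J b * J c)))) := by noncomm_ring
      _ = 0 := by rw [fXg a b X]; simp
  have stage1' : ∀ (a b c : A) (X : B),
      (J (a * b) - J b * J a) * X * (J (c * b) - J c * J b) = 0 := by
    intro a b c X
    have lin : ∀ Y : B, (J (c * b) - J c * J b) * Y * (J (a * b) - J b * J a)
        = -((J (a * b) - J a * J b) * Y * (J (c * b) - J b * J c)) := by
      intro Y
      have h0 := fXg (a + c) b Y
      rw [fadd a c b, gadd a c b] at h0
      have e2 : ((J (a * b) - J a * J b) + (J (c * b) - J c * J b)) * Y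
            * ((J (a * b) - J b * J a) + (J (c * b) - J b * J c))
          = ((J (a * b) - J a * J b) * Y * (J (a * b) - J b * J a))
            + ((J (c * b) - J c * J b) * Y * (J (c * b) - J b * J c))
            + (((J (a * b) - J a * J b) * Y * (J (c * b) - J b * J c))
              + ((J (c * b) - J c * J b) * Y * (J (a * b) - J b * J a))) := by noncomm_ring
      rw [e2, fXg a b Y, fXg c b Y, zero_add, zero_add] at h0
      exact neg_of_add _ _ h0
    apply spA
    intro Y
    calc (J (a * b) - J b * J a) * X * (J (c * b) - J c * J b) * Y
          * ((J (a * b) - J b * J a) * X * (J (c * b) - J c * J b))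
        = (J (a * b) - J b * J a) * X
            * ((J (c * b) - J c * J b) * Y * (J (a * b) - J b * J a))
            * (X * (J (c * b) - J c * J b)) := by noncomm_ring
      _ = (J (a * b) - J b * J a) * X
            * (-((J (a * b) - J a * J b) * Y * (J (c * b) - J b * J c)))
            * (X * (J (c * b) - J c * J b)) := by rw [lin Y]
      _ = -(((J (a * b) - J b * J a) * X * (J (a * b) - J a * J b))
            * (Y * ((J (c * b) - J b * J c) * X * (J (c * b) - J c * J b)))) := by noncomm_ring
      _ = 0 := by rw [gXf a b X]; simp
  -- stage 2 : fully mixed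
  have stage2 : ∀ (a b c d : A) (X : B),
      (J (a * b) - J a * J b) * X * (J (c * d) - J d * J c) = 0 := by
    intro a b c d X
    have lin : ∀ Y : B, (J (c * d) - J d * J c) * Y * (J (a * b) - J a * J b)
        = -((J (c * b) - J b * J c) * Y * (J (a * d) - J a * J d)) := by
      intro Y
      have h0 := stage1' c (b + d) a Y
      rw [gadd2 c b d, fadd2 a b d] at h0
      have e2 : ((J (c * b) - J b * J c) + (J (c * d) - J d * J c)) * Y
            * ((J (a * b) - J a * J b) + (J (a * d) - J a * J d))
          = ((J (c * b) - J b * J c) * Y * (J (a * b) - J a * J b))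
            + ((J (c * d) - J d * J c) * Y * (J (a * d) - J a * J d))
            + (((J (c * b) - J b * J c) * Y * (J (a * d) - J a * J d))
              + ((J (c * d) - J d * J c) * Y * (J (a * b) - J a * J b))) := by noncomm_ring
      rw [e2, stage1' c b a Y, stage1' c d a Y, zero_add, zero_add] at h0
      exact neg_of_add _ _ h0
    apply spA
    intro Y
    calc (J (a * b) - J a * J b) * X * (J (c * d) - J d * J c) * Y
          * ((J (a * b) - J a * J b) * X * (J (c * d) - J d * J c))
        = (J (a * b) - J a * J b) * X
            * ((J (c * d) - J d * J c) * Y * (J (a * b) - J a * J b))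
            * (X * (J (c * d) - J d * J c)) := by noncomm_ring
      _ = (J (a * b) - J a * J b) * X
            * (-((J (c * b) - J b * J c) * Y * (J (a * d) - J a * J d)))
            * (X * (J (c * d) - J d * J c)) := by rw [lin Y]
      _ = -(((J (a * b) - J a * J b) * X * (J (c * b) - J b * J c))
            * (Y * ((J (a * d) - J a * J d) * X * (J (c * d) - J d * J c)))) := by noncomm_ring
      _ = 0 := by rw [stage1 a b c X]; simp
  have stage2' : ∀ (a b c d : A) (X : B),
      (J (a * b) - J b * J a) * X * (J (c * d) - J c * J d) = 0 := by
    intro a b c d X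
    have lin : ∀ Y : B, (J (c * d) - J c * J d) * Y * (J (a * b) - J b * J a)
        = -((J (c * b) - J c * J b) * Y * (J (a * d) - J d * J a)) := by
      intro Y
      have h0 := stage1 c (b + d) a Y
      rw [fadd2 c b d, gadd2 a b d] at h0
      have e2 : ((J (c * b) - J c * J b) + (J (c * d) - J c * J d)) * Y
            * ((J (a * b) - J b * J a) + (J (a * d) - J d * J a))
          = ((J (c * b) - J c * J b) * Y * (J (a * b) - J b * J a))
            + ((J (c * d) - J c * J d) * Y * (J (a * d) - J d * J a))
            + (((J (c * b) - J c * J b) * Y * (J (a * d) - J d * J a))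
              + ((J (c * d) - J c * J d) * Y * (J (a * b) - J b * J a))) := by noncomm_ring
      rw [e2, stage1 c b a Y, stage1 c d a Y, zero_add, zero_add] at h0
      exact neg_of_add _ _ h0
    apply spA
    intro Y
    calc (J (a * b) - J b * J a) * X * (J (c * d) - J c * J d) * Y
          * ((J (a * b) - J b * J a) * X * (J (c * d) - J c * J d))
        = (J (a * b) - J b * J a) * X
            * ((J (c * d) - J c * J d) * Y * (J (a * b) - J b * J a))
            * (X * (J (c * d) - J c * J d)) := by noncomm_ring
      _ = (J (a * b) - J b * J a) * X
            * (-((J (c * b) - J c * J b) * Y * (J (a * d) - J d * J a)))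
            * (X * (J (c * d) - J c * J d)) := by rw [lin Y]
      _ = -(((J (a * b) - J b * J a) * X * (J (c * b) - J c * J b))
            * (Y * ((J (a * d) - J d * J a) * X * (J (c * d) - J c * J d)))) := by noncomm_ring
      _ = 0 := by rw [stage1' a b c X]; simp
  -- no-middle orthogonality : g(a,b) · f(c,d) = 0
  have gf : ∀ a b c d : A,
      (J (a * b) - J b * J a) * (J (c * d) - J c * J d) = 0 := by
    intro a b c d
    apply spA
    intro Y
    have e : (J (a * b) - J b * J a) * (J (c * d) - J c * J d) * Y
          * ((J (a * b) - J b * J a) * (J (c * d) - J c * J d))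
        = (J (a * b) - J b * J a)
          * ((J (c * d) - J c * J d) * Y * (J (a * b) - J b * J a))
          * (J (c * d) - J c * J d) := by noncomm_ring
    rw [e, stage2 c d a b Y, mul_zero, zero_mul]
  -- final assembly
  intro x y z w
  have idA : x * y * z * w + w * z * y * x
      = (x * y * (z * w) + (z * w) * y * x) + (w * z * (y * x) + (y * x) * z * w)
        - ((z * w) * (y * x) + (y * x) * (z * w)) := by noncomm_ring
  have expand : J (x * y * z * w + w * z * y * x)
      = (J x * J y * J (z * w) + J (z * w) * J y * J x)
        + (J w * J z * J (y * x) + J (y * x) * J z * J w)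
        - (J (z * w) * J (y * x) + J (y * x) * J (z * w)) := by
    rw [idA, map_sub, map_add, lin3 x y (z * w), lin3 w z (y * x), hJ (z * w) (y * x)]
  have fin : ((J x * J y * J (z * w) + J (z * w) * J y * J x)
        + (J w * J z * J (y * x) + J (y * x) * J z * J w)
        - (J (z * w) * J (y * x) + J (y * x) * J (z * w)))
      - (J x * J y * J z * J w + J w * J z * J y * J x)
      = -((J (z * w) - J w * J z) * (J (y * x) - J y * J x))
        - ((J (y * x) - J x * J y) * (J (z * w) - J z * J w)) := by noncomm_ring
  rw [gf z w y x, gf y x z w] at fin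
  simp only [neg_zero, sub_zero, zero_sub] at fin
  rw [expand]
  exact sub_eq_zero.mp fin
end
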